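/- arXiv:2601.14779 — 4 statements merged into one kernel-verified Lean document; each statement's English description precedes it below -/
import Mathlib

section
/- Let a ∈ ℝ³ be a unit vector, Θ ∈ (0, π/2), and let V = {z ∈ ℝ³ : ⟪z, a⟫ > ‖z‖·cos Θ} ∩ B, where B is an open ball centered at the origin with positive radius R. Then for every unit vector b ∈ ℝ³, the extended-real Lebesgue integral ∫_V ⟪∇G(z), b⟫² dz equals +∞; equivalently, since ∇G(z) = −z/(4π‖z‖³), the function z ↦ ⟪z, b⟫²/(16π²‖z‖⁶) is not Lebesgue integrable on V and its integral diverges to +∞. (Lemma A of the paper.) -/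
/-!
On an open subcone `K` of `V` on which `|⟪z, b⟫| > c‖z‖`, the integrand dominates
`c² / (16π²) · ‖z‖⁻⁴`; such a `K` exists because the open cone `V` cannot lie in the plane `b^⊥`.
And `‖z‖⁻ⁿ` with `n ≥ dim` has infinite integral over `K ∩ ball 0 R` for any open cone `K`:
substituting `z = 2w` shows that the integral over `K ∩ ball 0 (R/2)` is at least the one over
`K ∩ ball 0 R`, while the shell between the two radii contributes a positive amount.
-/

open MeasureTheory Module Metric Set
open scoped ENNReal Pointwise

section Scaling

variable {E : Type*} [NormedAddCommGroup E] [NormedSpace ℝ E] [MeasurableSpace E] [BorelSpace E]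
  [FiniteDimensional ℝ E] (μ : Measure E) [μ.IsAddHaarMeasure]

theorem lintegral_comp_smul (f : E → ℝ≥0∞) {r : ℝ} (hr : r ≠ 0) :
    ∫⁻ x, f (r • x) ∂μ = ENNReal.ofReal |(r ^ finrank ℝ E)⁻¹| * ∫⁻ x, f x ∂μ := by
  let e : E ≃ᵐ E := (Homeomorph.smul (Units.mk0 r hr)).toMeasurableEquiv
  calc ∫⁻ x, f (r • x) ∂μ = ∫⁻ y, f y ∂Measure.map (r • ·) μ := (lintegral_map_equiv f e).symm
    _ = _ := by rw [Measure.map_addHaar_smul μ hr, lintegral_smul_measure, smul_eq_mul]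

theorem setLIntegral_comp_smul (f : E → ℝ≥0∞) {r : ℝ} (hr : r ≠ 0) {s : Set E}
    (hs : MeasurableSet s) :
    ∫⁻ x in s, f (r • x) ∂μ = ENNReal.ofReal |(r ^ finrank ℝ E)⁻¹| * ∫⁻ x in r • s, f x ∂μ := by
  have hind : s.indicator (fun x ↦ f (r • x)) = fun x ↦ (r • s).indicator f (r • x) := by
    ext x
    by_cases hx : x ∈ s <;> simp [hx, smul_mem_smul_set_iff₀ hr]
  rw [← lintegral_indicator hs, ← lintegral_indicator (hs.const_smul₀ r), hind,
    lintegral_comp_smul μ _ hr]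

end Scaling

section Cone

variable {E : Type*} [NormedAddCommGroup E] [NormedSpace ℝ E] {K : Set E} {n : ℕ}

theorem smul_inter_ball_of_smul_mem (hK : ∀ r : ℝ, 0 < r → ∀ z ∈ K, r • z ∈ K)
    {r : ℝ} (hr : 0 < r) (R : ℝ) : r • (K ∩ ball 0 R) = K ∩ ball 0 (r * R) := by
  have hKr : r • K = K := by
    refine (smul_set_subset_iff.2 fun z hz ↦ hK r hr z hz).antisymm fun z hz ↦ ?_
    rw [mem_smul_set_iff_inv_smul_mem₀ hr.ne']
    exact hK _ (inv_pos.2 hr) z hz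
  rw [smul_set_inter₀ hr.ne', hKr, _root_.smul_ball hr.ne', smul_zero, Real.norm_of_nonneg hr.le]

variable [MeasurableSpace E] (μ : Measure E)

theorem setLIntegral_inv_norm_pow_cone_inter_shell_pos [OpensMeasurableSpace E]
    [μ.IsOpenPosMeasure] (hKo : IsOpen K)
    (hK : ∀ r : ℝ, 0 < r → ∀ z ∈ K, r • z ∈ K) {z₀ : E} (hz₀K : z₀ ∈ K) (hz₀ : z₀ ≠ 0)
    {R : ℝ} (hR : 0 < R) :
    0 < ∫⁻ z in K ∩ (ball 0 R \ closedBall 0 (R / 2)), ENNReal.ofReal (‖z‖ ^ n)⁻¹ ∂μ := by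
  set A := K ∩ (ball (0 : E) R \ closedBall 0 (R / 2))
  have hAne : A.Nonempty := by
    refine ⟨(3 * R / 4 / ‖z₀‖) • z₀, hK _ (by positivity) z₀ hz₀K, ?_⟩
    have : ‖(3 * R / 4 / ‖z₀‖) • z₀‖ = 3 * R / 4 := by
      rw [norm_smul, Real.norm_of_nonneg (by positivity),
        div_mul_cancel₀ _ (norm_ne_zero_iff.2 hz₀)]
    simp only [Set.mem_sdiff, mem_ball_zero_iff, mem_closedBall_zero_iff, this, not_le]
    constructor <;> linarith
  have hA_support : A ⊆ Function.support fun z : E ↦ ENNReal.ofReal (‖z‖ ^ n)⁻¹ :=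
    fun z hz ↦ by
      have : 0 < ‖z‖ := (half_pos hR).trans (by simpa using hz.2.2)
      simp only [Function.mem_support, ne_eq, ENNReal.ofReal_eq_zero, not_le]
      positivity
  rw [setLIntegral_pos_iff (by fun_prop), inter_eq_right.2 hA_support]
  exact (hKo.inter (isOpen_ball.sdiff isClosed_closedBall)).measure_pos μ hAne

variable [BorelSpace E] [FiniteDimensional ℝ E] [μ.IsAddHaarMeasure]

theorem setLIntegral_inv_norm_pow_cone_inter_ball_le_half
    (hKo : IsOpen K) (hK : ∀ r : ℝ, 0 < r → ∀ z ∈ K, r • z ∈ K) (hn : finrank ℝ E ≤ n) (R : ℝ) :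
    ∫⁻ z in K ∩ ball 0 R, ENNReal.ofReal (‖z‖ ^ n)⁻¹ ∂μ ≤
      ∫⁻ z in K ∩ ball 0 (R / 2), ENNReal.ofReal (‖z‖ ^ n)⁻¹ ∂μ := by
  set f : E → ℝ≥0∞ := fun z ↦ ENNReal.ofReal (‖z‖ ^ n)⁻¹
  have hf2 : ∀ z, f ((2 : ℝ) • z) = ENNReal.ofReal (2 ^ n)⁻¹ * f z := fun z ↦ by
    simp only [f, norm_smul, Real.norm_two, mul_pow, mul_inv]
    exact ENNReal.ofReal_mul (by positivity)
  have key := setLIntegral_comp_smul μ f two_ne_zero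
    (hKo.inter (isOpen_ball (x := 0) (ε := R / 2))).measurableSet
  rw [smul_inter_ball_of_smul_mem hK two_pos, mul_div_cancel₀ _ two_ne_zero, funext hf2,
    lintegral_const_mul _ (by fun_prop), abs_of_pos (by positivity)] at key
  have h2d : ENNReal.ofReal (2 ^ finrank ℝ E)⁻¹ ≠ 0 := by
    rw [ne_eq, ENNReal.ofReal_eq_zero, not_le]; positivity
  refine (ENNReal.mul_le_mul_iff_right h2d ENNReal.ofReal_ne_top).1 ?_
  calc ENNReal.ofReal (2 ^ finrank ℝ E)⁻¹ * ∫⁻ z in K ∩ ball 0 R, f z ∂μ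
      = ENNReal.ofReal (2 ^ n)⁻¹ * ∫⁻ z in K ∩ ball 0 (R / 2), f z ∂μ := key.symm
    _ ≤ ENNReal.ofReal (2 ^ finrank ℝ E)⁻¹ * ∫⁻ z in K ∩ ball 0 (R / 2), f z ∂μ := by
      gcongr
      exact one_le_two

theorem setLIntegral_inv_norm_pow_cone_inter_ball_eq_top (hKo : IsOpen K)
    (hK : ∀ r : ℝ, 0 < r → ∀ z ∈ K, r • z ∈ K) {z₀ : E} (hz₀K : z₀ ∈ K) (hz₀ : z₀ ≠ 0)
    (hn : finrank ℝ E ≤ n) {R : ℝ} (hR : 0 < R) :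
    ∫⁻ z in K ∩ ball 0 R, ENNReal.ofReal (‖z‖ ^ n)⁻¹ ∂μ = ⊤ := by
  set A := K ∩ (ball (0 : E) R \ closedBall 0 (R / 2))
  have hsplit : ∫⁻ z in K ∩ ball 0 (R / 2), ENNReal.ofReal (‖z‖ ^ n)⁻¹ ∂μ +
      ∫⁻ z in A, ENNReal.ofReal (‖z‖ ^ n)⁻¹ ∂μ ≤
      ∫⁻ z in K ∩ ball 0 R, ENNReal.ofReal (‖z‖ ^ n)⁻¹ ∂μ := by
    rw [← lintegral_union (hKo.inter (isOpen_ball.sdiff isClosed_closedBall)).measurableSet]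
    · exact lintegral_mono_set (union_subset
        (inter_subset_inter_right K (ball_subset_ball (by linarith)))
        (inter_subset_inter_right K sdiff_subset))
    · exact disjoint_left.2 fun z hz hzA ↦ hzA.2.2 (ball_subset_closedBall hz.2)
  by_contra htop
  have hshell := setLIntegral_inv_norm_pow_cone_inter_shell_pos μ (n := n) hKo hK hz₀K hz₀ hR
  exact (ENNReal.lt_add_right htop hshell.ne').not_ge
    ((add_le_add (setLIntegral_inv_norm_pow_cone_inter_ball_le_half μ hKo hK hn R) le_rfl).trans
      hsplit)

end Cone

section InnerProduct

variable {F : Type*} [NormedAddCommGroup F] [InnerProductSpace ℝ F] {b z : F} {c : ℝ}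

theorem exists_inner_ne_zero_of_isOpen {U : Set F} (hU : IsOpen U) (hne : U.Nonempty)
    (hb : b ≠ 0) : ∃ z ∈ U, inner ℝ z b ≠ 0 := by
  by_contra! h
  have hU_orth : U ⊆ (ℝ ∙ b)ᗮ := fun z hz ↦
    Submodule.mem_orthogonal_singleton_iff_inner_right.2 (by rw [real_inner_comm]; exact h z hz)
  have htop := Submodule.eq_top_of_nonempty_interior' _
    (hne.mono (hU.subset_interior_iff.2 hU_orth))
  have hbb : b ∈ (ℝ ∙ b)ᗮ := htop ▸ Submodule.mem_top
  exact hb (inner_self_eq_zero.1 (Submodule.mem_orthogonal_singleton_iff_inner_right.1 hbb))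

theorem mul_norm_smul_lt_abs_inner_smul (h : c * ‖z‖ < |inner ℝ z b|) {r : ℝ} (hr : 0 < r) :
    c * ‖r • z‖ < |inner ℝ (r • z) b| := by
  rw [norm_smul, real_inner_smul_left, abs_mul, Real.norm_of_nonneg hr.le, abs_of_pos hr,
    mul_left_comm]
  exact mul_lt_mul_of_pos_left h hr

theorem div_mul_inv_norm_pow_four_le_sq_inner_div (hc : 0 ≤ c) (h : c * ‖z‖ < |inner ℝ z b|)
    {k : ℝ} (hk : 0 ≤ k) : c ^ 2 / k * (‖z‖ ^ 4)⁻¹ ≤ inner ℝ z b ^ 2 / (k * ‖z‖ ^ 6) := by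
  have hz : 0 < ‖z‖ := norm_pos_iff.2 (by rintro rfl; simp at h)
  have hsq : c ^ 2 * ‖z‖ ^ 2 ≤ inner ℝ z b ^ 2 := by
    rw [← mul_pow, ← sq_abs (inner ℝ z b)]
    exact pow_le_pow_left₀ (by positivity) h.le 2
  calc c ^ 2 / k * (‖z‖ ^ 4)⁻¹ = c ^ 2 * ‖z‖ ^ 2 / (k * ‖z‖ ^ 6) := by
        field_simp
    _ ≤ inner ℝ z b ^ 2 / (k * ‖z‖ ^ 6) := by gcongr

theorem setLIntegral_sq_inner_div_norm_pow_six_eq_top [FiniteDimensional ℝ F] [MeasurableSpace F]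
    [BorelSpace F] (μ : Measure F) [μ.IsAddHaarMeasure] (hF : finrank ℝ F ≤ 4) {U : Set F}
    (hUo : IsOpen U) (hU : ∀ r : ℝ, 0 < r → ∀ z ∈ U, r • z ∈ U) (hne : U.Nonempty) (hb : b ≠ 0)
    {k : ℝ} (hk : 0 < k) {R : ℝ} (hR : 0 < R) :
    ∫⁻ z in U ∩ ball 0 R, ENNReal.ofReal (inner ℝ z b ^ 2 / (k * ‖z‖ ^ 6)) ∂μ = ⊤ := by
  obtain ⟨z₀, hz₀U, hz₀b⟩ := exists_inner_ne_zero_of_isOpen hUo hne hb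
  have hz₀ : z₀ ≠ 0 := by rintro rfl; simp at hz₀b
  set c := |inner ℝ z₀ b| / (2 * ‖z₀‖)
  have hc : 0 < c := div_pos (abs_pos.2 hz₀b) (by positivity)
  set K := U ∩ {z | c * ‖z‖ < |inner ℝ z b|}
  have hKo : IsOpen K := hUo.inter (isOpen_lt (by fun_prop) (by fun_prop))
  have hK : ∀ r : ℝ, 0 < r → ∀ z ∈ K, r • z ∈ K := fun r hr z hz ↦
    ⟨hU r hr z hz.1, mul_norm_smul_lt_abs_inner_smul hz.2 hr⟩
  have hz₀K : z₀ ∈ K := by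
    have : c * ‖z₀‖ = |inner ℝ z₀ b| / 2 := by
      simp only [c]
      field_simp [norm_ne_zero_iff.2 hz₀]
    exact ⟨hz₀U, by simp only [mem_ofPred_eq, this]; linarith [abs_pos.2 hz₀b]⟩
  have hck : ENNReal.ofReal (c ^ 2 / k) ≠ 0 := (ENNReal.ofReal_pos.2 (by positivity)).ne'
  refine eq_top_iff.2 ?_
  calc ⊤ = ENNReal.ofReal (c ^ 2 / k) * ∫⁻ z in K ∩ ball 0 R, ENNReal.ofReal (‖z‖ ^ 4)⁻¹ ∂μ := by
        rw [setLIntegral_inv_norm_pow_cone_inter_ball_eq_top μ hKo hK hz₀K hz₀ hF hR,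
          ENNReal.mul_top hck]
    _ = ∫⁻ z in K ∩ ball 0 R, ENNReal.ofReal (c ^ 2 / k * (‖z‖ ^ 4)⁻¹) ∂μ := by
        rw [← lintegral_const_mul _ (by fun_prop)]
        simp only [ENNReal.ofReal_mul (by positivity : 0 ≤ c ^ 2 / k)]
    _ ≤ ∫⁻ z in K ∩ ball 0 R, ENNReal.ofReal (inner ℝ z b ^ 2 / (k * ‖z‖ ^ 6)) ∂μ :=
        setLIntegral_mono' (hKo.inter isOpen_ball).measurableSet fun z hz ↦
          ENNReal.ofReal_le_ofReal
            (div_mul_inv_norm_pow_four_le_sq_inner_div hc.le hz.1.2 hk.le)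
    _ ≤ _ := lintegral_mono_set (inter_subset_inter_left _ inter_subset_left)

end InnerProduct

/-- **Lemma A.** For a unit vector `a`, an opening angle `Θ ∈ (0, π/2)` and an open ball `B`
of radius `R > 0` centered at the origin, the integral of `z ↦ ⟪∇G(z), b⟫² = ⟪z,b⟫²/(16π²‖z‖⁶)`
over the finite open cone `V = {z : ⟪z,a⟫ > ‖z‖ cos Θ} ∩ B` diverges to `+∞`, for every
unit vector `b`. -/
theorem lemmaA (a b : EuclideanSpace ℝ (Fin 3)) (ha : ‖a‖ = 1) (hb : ‖b‖ = 1)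
    (Θ R : ℝ) (hΘ : Θ ∈ Set.Ioo 0 (Real.pi / 2)) (hR : 0 < R) :
    ∫⁻ z in {z : EuclideanSpace ℝ (Fin 3) | (inner ℝ z a : ℝ) > ‖z‖ * Real.cos Θ}
        ∩ Metric.ball (0 : EuclideanSpace ℝ (Fin 3)) R,
      ENNReal.ofReal ((inner ℝ z b : ℝ) ^ 2 / (16 * Real.pi ^ 2 * ‖z‖ ^ 6)) = ⊤ := by
  have hcos : Real.cos Θ < 1 := by
    simpa using Real.cos_lt_cos_of_nonneg_of_le_pi le_rfl (by linarith [hΘ.2, Real.pi_pos]) hΘ.1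
  set V := {z : EuclideanSpace ℝ (Fin 3) | (inner ℝ z a : ℝ) > ‖z‖ * Real.cos Θ}
  have hcone : ∀ r : ℝ, 0 < r → ∀ z ∈ V, r • z ∈ V := by
    intro r hr z hz
    simp only [V, mem_ofPred_eq, norm_smul, real_inner_smul_left, Real.norm_of_nonneg hr.le] at hz ⊢
    nlinarith
  refine setLIntegral_sq_inner_div_norm_pow_six_eq_top volume (by simp)
    (isOpen_lt (by fun_prop) (by fun_prop)) hcone ⟨a, ?_⟩ (norm_ne_zero_iff.1 (by simp [hb]))
    (by positivity) hR
  simpa [ha, real_inner_self_eq_norm_sq] using hcos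
end

section
/- Let K ≥ 0 and δ > 0. Then there exist constants C > 0 and ε > 0 such that for every real h with 0 < h < ε, ∫_E (√(‖s‖² + t²) + h)⁻⁶ d(s,t) ≥ C·h⁻³, where E = {(s,t) ∈ ℝ² × ℝ : K‖s‖ < t and ‖s‖² + t² < δ²} and the integral is with respect to three-dimensional Lebesgue measure on ℝ² × ℝ ≅ ℝ³. (The core scaling estimate, combining (B.7)–(B.9), in the proof of Lemma B.2.) -/
open MeasureTheory
open scoped Pointwise

/-! The region `{K‖s‖ < t, ‖s‖² + t² < ρ²}` is the dilate by `ρ` of the same region with `ρ = 1`,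
a nonempty bounded open set, so its volume is `c ρ³` with `c > 0`. On it the integrand is at least
`(2ρ)⁻⁶`, hence the integral over the region with `ρ = h < δ` is at least `c h³ / (64 h⁶)`. -/

section ConeCap

variable {E : Type*} [NormedAddCommGroup E]

def coneCap (K ρ : ℝ) : Set (E × ℝ) := {p | K * ‖p.1‖ < p.2 ∧ ‖p.1‖ ^ 2 + p.2 ^ 2 < ρ ^ 2}

variable {K ρ : ℝ}

theorem coneCap_mono {ρ' : ℝ} (hρ : 0 ≤ ρ) (hρρ' : ρ ≤ ρ') :
    (coneCap K ρ : Set (E × ℝ)) ⊆ coneCap K ρ' := fun _ ⟨hcone, hball⟩ =>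
  ⟨hcone, hball.trans_le (pow_le_pow_left₀ hρ hρρ' 2)⟩

theorem isOpen_coneCap : IsOpen (coneCap K ρ : Set (E × ℝ)) :=
  show IsOpen ({p : E × ℝ | K * ‖p.1‖ < p.2} ∩ {p | ‖p.1‖ ^ 2 + p.2 ^ 2 < ρ ^ 2}) from
    (isOpen_lt (by fun_prop) (by fun_prop)).inter (isOpen_lt (by fun_prop) (by fun_prop))

theorem zero_half_mem_coneCap (hρ : 0 < ρ) : ((0 : E), ρ / 2) ∈ coneCap K ρ := by
  constructor <;> simp only [norm_zero] <;> nlinarith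

theorem coneCap_subset_closedBall : (coneCap K ρ : Set (E × ℝ)) ⊆ Metric.closedBall 0 |ρ| := by
  rintro ⟨s, t⟩ ⟨-, hball⟩
  rw [mem_closedBall_zero_iff, Prod.norm_mk, max_le_iff, Real.norm_eq_abs, ← abs_norm s]
  exact ⟨sq_le_sq.1 (by nlinarith [sq_nonneg t]), sq_le_sq.1 (by nlinarith [sq_nonneg ‖s‖])⟩

theorem sqrt_lt_of_mem_coneCap {p : E × ℝ} (hρ : 0 < ρ) (hp : p ∈ coneCap K ρ) :
    Real.sqrt (‖p.1‖ ^ 2 + p.2 ^ 2) < ρ :=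
  (Real.sqrt_lt' hρ).2 hp.2

theorem coneCap_eq_smul [NormedSpace ℝ E] (hρ : 0 < ρ) :
    (coneCap K ρ : Set (E × ℝ)) = ρ • coneCap K 1 := by
  ext ⟨s, t⟩
  rw [Set.mem_smul_set_iff_inv_smul_mem₀ hρ.ne']
  simp only [coneCap, Set.mem_ofPred_eq, Prod.smul_mk, norm_smul, Real.norm_eq_abs,
    abs_inv, abs_of_pos hρ, smul_eq_mul]
  rw [mul_left_comm, mul_lt_mul_iff_right₀ (inv_pos.2 hρ), mul_pow, mul_pow, ← mul_add, inv_pow,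
    one_pow, inv_mul_lt_iff₀ (by positivity), mul_one]

variable [MeasurableSpace E] (μ : Measure (E × ℝ))

theorem measure_coneCap_pos [μ.IsOpenPosMeasure] (hρ : 0 < ρ) : 0 < μ (coneCap K ρ) :=
  isOpen_coneCap.measure_pos μ ⟨_, zero_half_mem_coneCap hρ⟩

theorem measure_coneCap_lt_top [ProperSpace E] [IsFiniteMeasureOnCompacts μ] :
    μ (coneCap K ρ) < ⊤ :=
  (Metric.isBounded_closedBall.subset coneCap_subset_closedBall).measure_lt_top

theorem addHaar_coneCap [NormedSpace ℝ E] [FiniteDimensional ℝ E] [BorelSpace E]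
    [μ.IsAddHaarMeasure] (hρ : 0 < ρ) :
    μ (coneCap K ρ) = ENNReal.ofReal (ρ ^ (Module.finrank ℝ E + 1)) * μ (coneCap K 1) := by
  rw [coneCap_eq_smul hρ, Measure.addHaar_smul_of_nonneg μ hρ.le, Module.finrank_prod,
    Module.finrank_self]

end ConeCap

theorem scaling_estimate_general (K δ : ℝ) (hδ : 0 < δ) :
    ∃ C > (0 : ℝ), ∃ ε > (0 : ℝ), ∀ h : ℝ, 0 < h → h < ε →
      ENNReal.ofReal (C / h ^ 3) ≤
        ∫⁻ p in {p : EuclideanSpace ℝ (Fin 2) × ℝ |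
            K * ‖p.1‖ < p.2 ∧ ‖p.1‖ ^ 2 + p.2 ^ 2 < δ ^ 2},
          ENNReal.ofReal (1 / (Real.sqrt (‖p.1‖ ^ 2 + p.2 ^ 2) + h) ^ 6) := by
  -- `volume` on a product is `volume.prod volume` only up to unfolding; instance search misses it.
  have : (volume : Measure (EuclideanSpace ℝ (Fin 2) × ℝ)).IsAddHaarMeasure :=
    Measure.prod.instIsAddHaarMeasure _ _
  set c : ℝ := (volume (coneCap K 1 : Set (EuclideanSpace ℝ (Fin 2) × ℝ))).toReal
  have hc : 0 < c :=
    ENNReal.toReal_pos (measure_coneCap_pos _ one_pos).ne' (measure_coneCap_lt_top _).ne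
  refine ⟨c / 64, by positivity, δ, hδ, fun h h0 hhδ => ?_⟩
  have hbound : ∀ p ∈ (coneCap K h : Set (EuclideanSpace ℝ (Fin 2) × ℝ)),
      ENNReal.ofReal (1 / (2 * h) ^ 6) ≤
        ENNReal.ofReal (1 / (Real.sqrt (‖p.1‖ ^ 2 + p.2 ^ 2) + h) ^ 6) := fun p hp => by
    have hsqrt := sqrt_lt_of_mem_coneCap h0 hp
    gcongr
    linarith
  calc ENNReal.ofReal (c / 64 / h ^ 3)
      = ENNReal.ofReal (1 / (2 * h) ^ 6) *
          volume (coneCap K h : Set (EuclideanSpace ℝ (Fin 2) × ℝ)) := by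
        rw [addHaar_coneCap _ h0, finrank_euclideanSpace_fin,
          ← ENNReal.ofReal_toReal (measure_coneCap_lt_top _).ne,
          ← ENNReal.ofReal_mul (by positivity), ← ENNReal.ofReal_mul (by positivity)]
        congr 1
        field_simp
        ring
    _ = ∫⁻ _ in coneCap K h, ENNReal.ofReal (1 / (2 * h) ^ 6) := (setLIntegral_const _ _).symm
    _ ≤ ∫⁻ p in coneCap K h, ENNReal.ofReal (1 / (Real.sqrt (‖p.1‖ ^ 2 + p.2 ^ 2) + h) ^ 6) :=
        setLIntegral_mono (by fun_prop) hbound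
    _ ≤ _ := lintegral_mono_set (coneCap_mono h0.le hhδ.le)

/-- **The core scaling estimate (B.7)–(B.9) in the proof of Lemma B.2.** For `K ≥ 0` and
`δ > 0` there are `C > 0` and `ε > 0` such that for every `0 < h < ε`,
`∫_E (√(‖s‖² + t²) + h)⁻⁶ d(s,t) ≥ C h⁻³`, where
`E = {(s,t) ∈ ℝ² × ℝ : K‖s‖ < t, ‖s‖² + t² < δ²}`. -/
theorem scaling_estimate (K δ : ℝ) (hK : 0 ≤ K) (hδ : 0 < δ) :
    ∃ C > (0 : ℝ), ∃ ε > (0 : ℝ), ∀ h : ℝ, 0 < h → h < ε →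
      ENNReal.ofReal (C / h ^ 3) ≤
        ∫⁻ p in {p : EuclideanSpace ℝ (Fin 2) × ℝ |
            K * ‖p.1‖ < p.2 ∧ ‖p.1‖ ^ 2 + p.2 ^ 2 < δ ^ 2},
          ENNReal.ofReal (1 / (Real.sqrt (‖p.1‖ ^ 2 + p.2 ^ 2) + h) ^ 6) :=
  scaling_estimate_general K δ hδ
end

section
/- Let Ω ⊆ ℝ³ be a bounded open set and b a boundary point of Ω satisfying the exterior Lipschitz graph condition at b. Then there exist constants C₁ > 0 and ε > 0 such that for every x ∈ Ω with ‖x − b‖ < ε, ∫_{ℝ³ ∖ closure(Ω)} ‖z − x‖⁻⁶ dz ≥ C₁ / ‖x − b‖³. (Estimate (B.4) of Lemma B.2.) -/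
open MeasureTheory Filter Metric
set_option maxHeartbeats 1000000
open scoped ENNReal Topology

noncomputable section

/-- The identification of `ℝ² × ℝ` with `ℝ³`: `(s, t) ↦ (s₁, s₂, t)`. -/
def emb (s : EuclideanSpace ℝ (Fin 2)) (t : ℝ) : EuclideanSpace ℝ (Fin 3) :=
  (EuclideanSpace.equiv (Fin 3) ℝ).symm ![s 0, s 1, t]

/-- The exterior Lipschitz graph condition at a boundary point `b` of `Ω ⊆ ℝ³`: there are
`δ > 0`, an orthogonal transformation `A` of `ℝ³`, and a Lipschitz function `φ : ℝ² → ℝ`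
with `φ(0) = 0` such that every point `b + A(s,t)` with `φ(s) < t` and `‖s‖² + t² < δ²`
lies in `ℝ³ ∖ closure Ω`. -/
def ExtLipschitzGraphCond (Ω : Set (EuclideanSpace ℝ (Fin 3)))
    (b : EuclideanSpace ℝ (Fin 3)) : Prop :=
  ∃ δ > (0 : ℝ), ∃ A : EuclideanSpace ℝ (Fin 3) ≃ₗᵢ[ℝ] EuclideanSpace ℝ (Fin 3),
    ∃ φ : EuclideanSpace ℝ (Fin 2) → ℝ, ∃ L : NNReal, LipschitzWith L φ ∧ φ 0 = 0 ∧
      ∀ (s : EuclideanSpace ℝ (Fin 2)) (t : ℝ), φ s < t → ‖s‖ ^ 2 + t ^ 2 < δ ^ 2 →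
        b + A (emb s t) ∈ (closure Ω)ᶜ

lemma emb_sub (s s' : EuclideanSpace ℝ (Fin 2)) (t t' : ℝ) :
    emb s t - emb s' t' = emb (s - s') (t - t') := by
  ext i; fin_cases i <;> simp [emb]

lemma norm_emb (s : EuclideanSpace ℝ (Fin 2)) (t : ℝ) :
    ‖emb s t‖ ^ 2 = ‖s‖ ^ 2 + t ^ 2 := by
  rw [EuclideanSpace.norm_eq, EuclideanSpace.norm_eq,
    Real.sq_sqrt (by positivity), Real.sq_sqrt (by positivity)]
  simp [Fin.sum_univ_three, Fin.sum_univ_two, emb, sq_abs]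

lemma emb_eq (u : EuclideanSpace ℝ (Fin 3)) :
    emb ((EuclideanSpace.equiv (Fin 2) ℝ).symm ![u 0, u 1]) (u 2) = u := by
  ext i; fin_cases i <;> rfl


/-- **Estimate (B.4) of Lemma B.2.** If `Ω ⊆ ℝ³` is a bounded open set and `b ∈ ∂Ω` satisfies
the exterior Lipschitz graph condition, then there are `C₁ > 0` and `ε > 0` such that for every
`x ∈ Ω` with `‖x − b‖ < ε`, `∫_{ℝ³ ∖ closure Ω} ‖z − x‖⁻⁶ dz ≥ C₁ / ‖x − b‖³`. -/
theorem estimate_B4 (Ω : Set (EuclideanSpace ℝ (Fin 3))) (hΩo : IsOpen Ω)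
    (hΩb : Bornology.IsBounded Ω) (b : EuclideanSpace ℝ (Fin 3)) (hb : b ∈ frontier Ω)
    (hcond : ExtLipschitzGraphCond Ω b) :
    ∃ C₁ > (0 : ℝ), ∃ ε > (0 : ℝ), ∀ x ∈ Ω, ‖x - b‖ < ε →
      ENNReal.ofReal (C₁ / ‖x - b‖ ^ 3) ≤
        ∫⁻ z in (closure Ω)ᶜ, ENNReal.ofReal (1 / ‖z - x‖ ^ 6) := by

  obtain ⟨δ, hδ, A, φ, L, hL, hφ0, hgr⟩ := hcond
  set c := (volume (ball (0 : EuclideanSpace ℝ (Fin 3)) 1)).toReal with hcdef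
  have hc0 : 0 < c :=
    ENNReal.toReal_pos (measure_ball_pos _ _ one_pos).ne' measure_ball_lt_top.ne
  have hL1 : (0:ℝ) < (L:ℝ) + 1 := by positivity
  refine ⟨c / (729 * ((L:ℝ) + 1) ^ 3), by positivity, δ / 3, by positivity, ?_⟩
  intro x hx hxb
  set r := ‖x - b‖ with hrdef
  have hbΩ : b ∉ Ω := by
    have := hb.2
    rw [hΩo.interior_eq] at this
    exact this
  have hr : 0 < r := by
    have hne : x ≠ b := by rintro rfl; exact hbΩ hx
    simpa [hrdef, sub_eq_zero] using hne
  set ρ := r / ((L:ℝ) + 1) with hρdef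
  have hρ : 0 < ρ := by positivity
  have hρr : ρ ≤ r := by
    rw [hρdef]
    exact div_le_self hr.le (by simp)
  set p := b + A (emb 0 r) with hpdef
  have hAnorm : ‖A (emb 0 r)‖ = r := by
    rw [A.norm_map]
    have h1 := norm_emb 0 r
    simp only [norm_zero] at h1
    nlinarith [norm_nonneg (emb 0 r)]
  have hsub : ball p ρ ⊆ (closure Ω)ᶜ := by
    intro z hz
    set u := A.symm (z - b) with hudef
    set s : EuclideanSpace ℝ (Fin 2) := (EuclideanSpace.equiv (Fin 2) ℝ).symm ![u 0, u 1]
      with hsdef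
    have hu : emb s (u 2) = u := emb_eq u
    have hz' : b + A (emb s (u 2)) = z := by
      rw [hu, hudef]; simp
    have hnorm : ‖emb s (u 2) - emb 0 r‖ < ρ := by
      have h1 : A (emb s (u 2) - emb 0 r) = z - p := by
        rw [map_sub, hu, hudef, hpdef]
        simp
        abel
      have h2 : ‖emb s (u 2) - emb 0 r‖ = ‖z - p‖ := by
        rw [← h1, A.norm_map]
      rw [h2, ← dist_eq_norm]
      exact mem_ball.mp hz
    have hsq : ‖s‖ ^ 2 + (u 2 - r) ^ 2 < ρ ^ 2 := by
      have h3 := norm_emb s (u 2 - r)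
      rw [emb_sub, sub_zero] at hnorm
      nlinarith [norm_nonneg (emb s (u 2 - r))]
    have hs : ‖s‖ < ρ := by nlinarith [norm_nonneg s, sq_nonneg (u 2 - r)]
    have ht : |u 2 - r| < ρ := by
      nlinarith [abs_nonneg (u 2 - r), sq_abs (u 2 - r), sq_nonneg (‖s‖)]
    have hφs : φ s ≤ (L:ℝ) * ‖s‖ := by
      have := hL.dist_le_mul s 0
      rw [hφ0, dist_zero_right] at this
      exact (le_abs_self _).trans (by rwa [Real.norm_eq_abs, dist_zero_right] at this)
    have hφlt : φ s < u 2 := by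
      have h4 : (L:ℝ) * ‖s‖ ≤ (L:ℝ) * ρ := by
        exact mul_le_mul_of_nonneg_left hs.le L.coe_nonneg
      have h5 : (L:ℝ) * ρ = r - ρ := by
        rw [hρdef]; field_simp; ring
      have h6 : r - ρ < u 2 := by
        have := abs_lt.mp ht
        linarith [this.1]
      linarith
    have hin : ‖s‖ ^ 2 + (u 2) ^ 2 < δ ^ 2 := by
      have h7 := abs_lt.mp ht
      have h8 : r < δ / 3 := hxb
      nlinarith [norm_nonneg s]
    have := hgr s (u 2) hφlt hin
    rwa [hz'] at this
  -- x ≠ z for z outside closure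
  have hxcl : x ∈ closure Ω := subset_closure hx
  calc ENNReal.ofReal (c / (729 * ((L:ℝ) + 1) ^ 3) / r ^ 3)
      = ENNReal.ofReal (1 / (3 * r) ^ 6) * volume (ball p ρ) := by
        rw [Measure.addHaar_ball _ _ hρ.le, finrank_euclideanSpace_fin,
          show volume (ball (0 : EuclideanSpace ℝ (Fin 3)) 1) = ENNReal.ofReal c from
            (ENNReal.ofReal_toReal measure_ball_lt_top.ne).symm,
          ← ENNReal.ofReal_mul (by positivity), ← ENNReal.ofReal_mul (by positivity)]
        congr 1
        rw [hρdef]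
        field_simp
        ring
    _ ≤ ∫⁻ z in ball p ρ, ENNReal.ofReal (1 / ‖z - x‖ ^ 6) := by
        rw [← setLIntegral_const]
        apply setLIntegral_mono' measurableSet_ball
        intro z hz
        apply ENNReal.ofReal_le_ofReal
        have hzx0 : 0 < ‖z - x‖ := by
          have hzc : z ∉ closure Ω := hsub hz
          have : z ≠ x := fun h => hzc (h ▸ hxcl)
          simpa [sub_eq_zero] using this
        have hzx : ‖z - x‖ ≤ 3 * r := by
          have h1 : ‖z - p‖ < ρ := by rw [← dist_eq_norm]; exact mem_ball.mp hz
          have h2 : ‖p - b‖ = r := by rw [hpdef]; simpa using hAnorm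
          calc ‖z - x‖ ≤ ‖z - p‖ + ‖p - b‖ + ‖b - x‖ := by
                simpa [dist_eq_norm] using dist_triangle4 z p b x
            _ ≤ 3 * r := by
                rw [h2]
                have : ‖b - x‖ = r := by rw [hrdef, norm_sub_rev]
                linarith
        apply one_div_le_one_div_of_le (by positivity)
        exact pow_le_pow_left₀ (norm_nonneg _) hzx 6
    _ ≤ ∫⁻ z in (closure Ω)ᶜ, ENNReal.ofReal (1 / ‖z - x‖ ^ 6) :=
        lintegral_mono_set hsub
end
end

section
/- Let Ω ⊆ ℝ³ be an open set, x ∈ Ω, and σ ⊆ ℝ³ a compact set of Lebesgue measure zero. Fix j ∈ {1,2,3} and set Φ(z) = ∂G/∂z_j (z − x), the j-th partial derivative of G evaluated at z − x. Let (v_n) be a sequence of measurable functions on Ω such that ∫_K (v_n − Φ)² dz → 0 as n → ∞ for every compact set K ⊆ Ω ∖ σ. Then for every finite open cone V with vertex at x, i.e. V = {z ∈ ℝ³ : ⟪z − x, a⟫ > ‖z − x‖·cos Θ} ∩ B(x,R) with a a unit vector, Θ ∈ (0, π/2) and R > 0, one has ∫_{V ∩ Ω} v_n² dz → +∞ as n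 → ∞. (Proposition 3.1(a), stated with the defining convergence property of a needle sequence as hypothesis.) -/
/-!
On a subcone of `V` on which `|(z - x)_j| ≥ m ‖z - x‖`, the square `Φ²` is at least a multiple of
`‖z - x‖⁻⁴`. The dyadically shrunk balls `x + 2⁻ᵏ • B` of a fixed ball `B` of directions in that
subcone are disjoint, have volume `∼ 2⁻³ᵏ` and carry `Φ²`-mass `≳ 2ᵏ`, so `∫_{V ∩ Ω} Φ² = ∞`.
Removing the null set `σ` changes nothing, and by inner regularity some compact
`K ⊆ (V ∩ Ω) ∖ σ` carries arbitrarily large `Φ²`-mass. On `K` the function `Φ` is bounded and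
`∫_K Φ² ≤ 2 ∫_K v_n² + 2 ∫_K (v_n - Φ)²`, with the last term eventually below `1`.
-/

open MeasureTheory Filter Metric Set Real
open scoped ENNReal Topology

section Geometry

variable {E : Type*} [NormedAddCommGroup E] [InnerProductSpace ℝ E]

lemma smul_mem_cone {a u : E} {c s : ℝ} (hs : 0 < s) (hu : ‖u‖ * c < inner ℝ u a) :
    ‖s • u‖ * c < inner ℝ (s • u) a := by
  rw [norm_smul, real_inner_smul_left, Real.norm_of_nonneg hs.le, mul_assoc]
  exact mul_lt_mul_of_pos_left hu hs

lemma exists_ball_subset_cone {ℓ : E →L[ℝ] ℝ} (hℓ : ℓ ≠ 0) {a : E} (ha : ‖a‖ = 1) {c : ℝ}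
    (hc : c < 1) :
    ∃ w : E, ∃ δ > 0, ∃ m > 0, ∀ u ∈ ball w δ,
      ‖u‖ * c < inner ℝ u a ∧ m ≤ |ℓ u| ∧ 1 / 2 < ‖u‖ ∧ ‖u‖ < 1 := by
  set O := {u : E | ‖u‖ * c < inner ℝ u a}
  have hO : IsOpen O := isOpen_lt (by fun_prop) (by fun_prop)
  have haO : a ∈ O := by
    simpa [O, real_inner_self_eq_norm_sq, ha] using hc
  have hker : Dense (LinearMap.ker (ℓ : E →ₗ[ℝ] ℝ) : Set E)ᶜ := by
    refine interior_eq_empty_iff_dense_compl.1 (not_nonempty_iff_eq_empty.1 fun h => hℓ ?_)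
    exact ContinuousLinearMap.coe_injective (LinearMap.ker_eq_top.1
      ((LinearMap.ker (ℓ : E →ₗ[ℝ] ℝ)).eq_top_of_nonempty_interior' h))
  obtain ⟨u, huO, hℓu⟩ := hker.inter_open_nonempty O hO ⟨a, haO⟩
  replace hℓu : ℓ u ≠ 0 := hℓu
  have hu0 : u ≠ 0 := fun h => hℓu (by simp [h])
  have hu : 0 < ‖u‖ := norm_pos_iff.2 hu0
  set w := (3 / 4 * ‖u‖⁻¹) • u
  have hw : ‖w‖ = 3 / 4 := by
    rw [norm_smul, Real.norm_of_nonneg (by positivity)]; field_simp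
  have hℓw : 0 < |ℓ w| := by
    simp [w, hℓu, hu0]
  have hP : IsOpen {v : E | ‖v‖ * c < inner ℝ v a ∧ |ℓ w| / 2 < |ℓ v| ∧ 1 / 2 < ‖v‖ ∧ ‖v‖ < 1} :=
    hO.and ((isOpen_lt (by fun_prop) (by fun_prop)).and
      ((isOpen_lt (by fun_prop) (by fun_prop)).and (isOpen_lt (by fun_prop) (by fun_prop))))
  obtain ⟨δ, hδ, hball⟩ := Metric.isOpen_iff.1 hP w
    ⟨smul_mem_cone (by positivity) huO, half_lt_self hℓw, by rw [hw]; norm_num,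
      by rw [hw]; norm_num⟩
  exact ⟨w, δ, hδ, |ℓ w| / 2, by positivity, fun v hv =>
    let ⟨h1, h2, h3, h4⟩ := hball hv; ⟨h1, h2.le, h3, h4⟩⟩

lemma inv_smul_sub_mem_ball {x w z : E} {t δ : ℝ} (ht : 0 < t) (hz : z ∈ ball (x + t • w) (t * δ)) :
    t⁻¹ • (z - x) ∈ ball w δ := by
  rw [mem_ball, dist_eq_norm] at *
  have : t⁻¹ • (z - x) - w = t⁻¹ • (z - (x + t • w)) := by
    rw [smul_sub, smul_sub, smul_add, inv_smul_smul₀ ht.ne']; abel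
  rw [this, norm_smul, Real.norm_of_nonneg (inv_nonneg.2 ht.le), inv_mul_lt_iff₀ ht]
  exact hz

end Geometry

section Measure

variable {α : Type*} [MeasurableSpace α] {μ : Measure α}

lemma setLIntegral_eq_top_of_pairwise_disjoint {f : α → ℝ≥0∞} {s : Set α} {A : ℕ → Set α}
    (hAm : ∀ k, MeasurableSet (A k)) (hA : Pairwise (Function.onFun Disjoint A))
    (hAs : ∀ k, A k ⊆ s) {κ : ℝ≥0∞} (hκ : κ ≠ 0) (hκA : ∀ k, κ ≤ ∫⁻ x in A k, f x ∂μ) :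
    ∫⁻ x in s, f x ∂μ = ⊤ :=
  top_unique <| calc
    ⊤ = ∑' _ : ℕ, κ := (ENNReal.tsum_const_eq_top_of_ne_zero hκ).symm
    _ ≤ ∑' k, ∫⁻ x in A k, f x ∂μ := ENNReal.tsum_le_tsum hκA
    _ = ∫⁻ x in ⋃ k, A k, f x ∂μ := (lintegral_iUnion hAm hA _).symm
    _ ≤ ∫⁻ x in s, f x ∂μ := lintegral_mono_set (iUnion_subset hAs)

lemma lintegral_ofReal_sq_sub_le {f : α → ℝ} (hf : Measurable f) (g : α → ℝ) :
    ∫⁻ x, ENNReal.ofReal ((f x - g x) ^ 2) ∂μ ≤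
      2 * ∫⁻ x, ENNReal.ofReal (f x ^ 2) ∂μ + 2 * ∫⁻ x, ENNReal.ofReal (g x ^ 2) ∂μ := by
  have hpt : ∀ x, ENNReal.ofReal ((f x - g x) ^ 2) ≤
      2 * ENNReal.ofReal (f x ^ 2) + 2 * ENNReal.ofReal (g x ^ 2) := fun x => by
    rw [← ENNReal.ofReal_ofNat, ← ENNReal.ofReal_mul zero_le_two, ← ENNReal.ofReal_mul zero_le_two,
      ← ENNReal.ofReal_add (by positivity) (by positivity)]
    exact ENNReal.ofReal_le_ofReal (by nlinarith [sq_nonneg (f x + g x)])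
  have hf2 : Measurable fun x => ENNReal.ofReal (f x ^ 2) := (hf.pow_const 2).ennreal_ofReal
  calc _ ≤ ∫⁻ x, 2 * ENNReal.ofReal (f x ^ 2) + 2 * ENNReal.ofReal (g x ^ 2) ∂μ :=
        lintegral_mono hpt
    _ = _ := by
      rw [lintegral_add_left (hf2.const_mul 2), lintegral_const_mul 2 hf2,
        lintegral_const_mul' 2 _ ENNReal.ofNat_ne_top]

lemma lintegral_ofReal_sq_le_of_integral_sq_sub_le {f g : α → ℝ} (hf : Measurable f)
    (hg : Measurable g) (hg_fin : ∫⁻ x, ENNReal.ofReal (g x ^ 2) ∂μ ≠ ⊤) {ε : ℝ}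
    (h : ∫ x, (f x - g x) ^ 2 ∂μ ≤ ε) :
    ∫⁻ x, ENNReal.ofReal (g x ^ 2) ∂μ ≤
      2 * ∫⁻ x, ENNReal.ofReal (f x ^ 2) ∂μ + 2 * ENNReal.ofReal ε := by
  by_cases hI : ∫⁻ x, ENNReal.ofReal ((f x - g x) ^ 2) ∂μ = ⊤
  · -- the Bochner integral in `h` is a junk `0`, but then `f` is not square integrable either
    have hf_top : ∫⁻ x, ENNReal.ofReal (f x ^ 2) ∂μ = ⊤ := by
      have := hI ▸ lintegral_ofReal_sq_sub_le (μ := μ) hf g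
      simpa [ENNReal.add_eq_top, ENNReal.mul_eq_top, hg_fin] using this
    simp [hf_top]
  · have hint : Integrable (fun x => (f x - g x) ^ 2) μ :=
      ⟨((hf.sub hg).pow_const 2).aestronglyMeasurable,
        (hasFiniteIntegral_iff_ofReal (ae_of_all _ fun _ => sq_nonneg _)).2
          (lt_top_iff_ne_top.2 hI)⟩
    have hIε : ∫⁻ x, ENNReal.ofReal ((f x - g x) ^ 2) ∂μ ≤ ENNReal.ofReal ε := by
      rw [← ofReal_integral_eq_lintegral_ofReal hint (ae_of_all _ fun _ => sq_nonneg _)]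
      exact ENNReal.ofReal_le_ofReal h
    calc ∫⁻ x, ENNReal.ofReal (g x ^ 2) ∂μ
        = ∫⁻ x, ENNReal.ofReal ((f x - (f x - g x)) ^ 2) ∂μ := by simp_rw [sub_sub_cancel]
      _ ≤ _ := lintegral_ofReal_sq_sub_le hf _
      _ ≤ _ := by gcongr

end Measure

lemma IsOpen.exists_isCompact_lt_setLIntegral {X : Type*} [MetricSpace X] [ProperSpace X]
    [MeasurableSpace X] [OpensMeasurableSpace X] {μ : Measure X} {f : X → ℝ≥0∞} {U : Set X}
    (hU : IsOpen U) {b : ℝ≥0∞} (hb : b < ∫⁻ x in U, f x ∂μ) :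
    ∃ K ⊆ U, IsCompact K ∧ b < ∫⁻ x in K, f x ∂μ := by
  obtain ⟨F, hFc, -, hFun, hFmono⟩ := hU.exists_iUnion_isClosed
  set K := fun n => F n ∩ compactCovering X n
  have hK : ∀ n, IsCompact (K n) := fun n => (isCompact_compactCovering X n).inter_left (hFc n)
  have hKun : ⋃ n, K n = U := by
    rw [iUnion_inter_of_monotone hFmono (compactCovering_subset X), hFun, iUnion_compactCovering,
      inter_univ]
  have hmono : Monotone K := hFmono.inter (fun _ _ h => compactCovering_subset X h)
  rw [← withDensity_apply f hU.measurableSet, ← hKun, hmono.measure_iUnion, lt_iSup_iff] at hb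
  obtain ⟨n, hn⟩ := hb
  exact ⟨K n, hKun ▸ subset_iUnion K n, hK n,
    by rwa [withDensity_apply f (hK n).measurableSet] at hn⟩

/-- `∂G/∂z_j (z - x)` for the Newtonian kernel `G(z) = 1 / (4π‖z‖)`. -/
noncomputable def newtonianDipole (x : EuclideanSpace ℝ (Fin 3)) (j : Fin 3)
    (z : EuclideanSpace ℝ (Fin 3)) : ℝ :=
  -((z - x) j) / (4 * π * ‖z - x‖ ^ 3)

lemma continuousOn_newtonianDipole (x : EuclideanSpace ℝ (Fin 3)) (j : Fin 3) :
    ContinuousOn (newtonianDipole x j) {x}ᶜ := by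
  refine ContinuousOn.div (by fun_prop) (by fun_prop) fun z hz => ?_
  have : 0 < ‖z - x‖ := norm_pos_iff.2 (sub_ne_zero.2 hz)
  positivity

lemma measurable_newtonianDipole (x : EuclideanSpace ℝ (Fin 3)) (j : Fin 3) :
    Measurable (newtonianDipole x j) := by
  unfold newtonianDipole; fun_prop

lemma le_sq_newtonianDipole_add_smul (x u : EuclideanSpace ℝ (Fin 3)) (j : Fin 3) {m t : ℝ}
    (hm : 0 < m) (ht : 0 < t) (hmu : m ≤ |u j|) (hu : ‖u‖ ≤ 1) :
    m ^ 2 / (16 * π ^ 2 * t ^ 4) ≤ newtonianDipole x j (x + t • u) ^ 2 := by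
  have hu0 : 0 < ‖u‖ := norm_pos_iff.2 fun h => by simp [h] at hmu; linarith
  have hsq : newtonianDipole x j (x + t • u) ^ 2 = u j ^ 2 / (16 * π ^ 2 * t ^ 4 * ‖u‖ ^ 6) := by
    simp only [newtonianDipole, add_sub_cancel_left, PiLp.smul_apply, smul_eq_mul, norm_smul,
      Real.norm_of_nonneg ht.le]
    field_simp
    ring
  rw [hsq]
  refine div_le_div₀ (sq_nonneg _) ?_ (by positivity) ?_
  · simpa only [sq_abs] using pow_le_pow_left₀ hm.le hmu 2
  · calc 16 * π ^ 2 * t ^ 4 * ‖u‖ ^ 6 ≤ 16 * π ^ 2 * t ^ 4 * 1 := by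
          gcongr; exact pow_le_one₀ hu0.le hu
      _ = _ := mul_one _

lemma le_setLIntegral_sq_newtonianDipole_ball (x w : EuclideanSpace ℝ (Fin 3)) (j : Fin 3)
    {δ m t r : ℝ} (hδ : 0 < δ) (hm : 0 < m) (ht : 0 < t) (htr : t ≤ r)
    (hw : ∀ u ∈ ball w δ, m ≤ |u j| ∧ ‖u‖ ≤ 1) :
    ENNReal.ofReal (m ^ 2 * δ ^ 3 / (16 * π ^ 2 * r)) *
        volume (ball (0 : EuclideanSpace ℝ (Fin 3)) 1) ≤
      ∫⁻ z in ball (x + t • w) (t * δ), ENNReal.ofReal (newtonianDipole x j z ^ 2) := by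
  calc _ ≤ ENNReal.ofReal (m ^ 2 / (16 * π ^ 2 * t ^ 4)) * volume (ball (x + t • w) (t * δ)) := by
        rw [Measure.addHaar_ball volume (x + t • w) (by positivity), finrank_euclideanSpace_fin,
          ← mul_assoc, ← ENNReal.ofReal_mul (by positivity),
          show m ^ 2 / (16 * π ^ 2 * t ^ 4) * (t * δ) ^ 3 = m ^ 2 * δ ^ 3 / (16 * π ^ 2 * t) by
            field_simp]
        gcongr
    _ = ∫⁻ _ in ball (x + t • w) (t * δ), ENNReal.ofReal (m ^ 2 / (16 * π ^ 2 * t ^ 4)) :=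
        (setLIntegral_const _ _).symm
    _ ≤ _ := setLIntegral_mono' measurableSet_ball fun z hz => by
        have hu := inv_smul_sub_mem_ball ht hz
        rw [← add_sub_cancel x z, ← smul_inv_smul₀ ht.ne' (z - x)]
        exact ENNReal.ofReal_le_ofReal
          (le_sq_newtonianDipole_add_smul x _ j hm ht (hw _ hu).1 (hw _ hu).2)

lemma setLIntegral_sq_newtonianDipole_cone_eq_top (x a : EuclideanSpace ℝ (Fin 3)) (ha : ‖a‖ = 1)
    {c : ℝ} (hc : c < 1) (j : Fin 3) {r : ℝ} (hr : 0 < r) :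
    ∫⁻ z in {z | ‖z - x‖ * c < inner ℝ (z - x) a} ∩ ball x r,
      ENNReal.ofReal (newtonianDipole x j z ^ 2) = ⊤ := by
  obtain ⟨w, δ, hδ, m, hm, hw⟩ := exists_ball_subset_cone (ℓ := EuclideanSpace.proj j)
    (fun h => by simpa using congr($h (EuclideanSpace.single j 1))) ha hc
  set t : ℕ → ℝ := fun k => r / 2 ^ k
  have ht : ∀ k, 0 < t k := fun k => by positivity
  have ht_succ : ∀ k, t (k + 1) = t k / 2 := fun k => by simp only [t]; ring
  have ht_anti : Antitone t := antitone_nat_of_succ_le fun k => by rw [ht_succ]; linarith [ht k]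
  have ht_le : ∀ k, t k ≤ r := fun k => (ht_anti (Nat.zero_le k)).trans_eq (by simp [t])
  set A : ℕ → Set (EuclideanSpace ℝ (Fin 3)) := fun k => ball (x + t k • w) (t k * δ)
  have hA : ∀ k, ∀ z ∈ A k, ∃ u ∈ ball w δ, z = x + t k • u := fun k z hz =>
    ⟨_, inv_smul_sub_mem_ball (ht k) hz, by rw [smul_inv_smul₀ (ht k).ne', add_sub_cancel]⟩
  have hA_shell : ∀ k, A k ⊆ (‖· - x‖) ⁻¹' Ioo (t (k + 1)) (t k) := by
    rintro k _ hz
    obtain ⟨u, hu, rfl⟩ := hA k _ hz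
    have hnorm : ‖x + t k • u - x‖ = t k * ‖u‖ := by
      rw [add_sub_cancel_left, norm_smul, Real.norm_of_nonneg (ht k).le]
    obtain ⟨-, -, hu1, hu2⟩ := hw u hu
    simp only [mem_preimage, mem_Ioo, hnorm, ht_succ]
    constructor <;> nlinarith [ht k]
  have hA_disj : Pairwise (Function.onFun Disjoint A) :=
    ht_anti.pairwise_disjoint_on_Ioo_succ.mono fun k l h =>
      (h.preimage _).mono (hA_shell k) (hA_shell l)
  have hA_cone : ∀ k, A k ⊆ {z | ‖z - x‖ * c < inner ℝ (z - x) a} ∩ ball x r := by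
    rintro k _ hz
    obtain ⟨u, hu, rfl⟩ := hA k _ hz
    refine ⟨?_, ?_⟩
    · simpa only [mem_ofPred_eq, add_sub_cancel_left] using smul_mem_cone (ht k) (hw u hu).1
    · rw [mem_ball, dist_eq_norm]
      exact (hA_shell k hz).2.trans_le (ht_le k)
  exact setLIntegral_eq_top_of_pairwise_disjoint (fun _ => measurableSet_ball) hA_disj hA_cone
    (mul_ne_zero (by simp; positivity) (measure_ball_pos _ _ one_pos).ne') fun k =>
      le_setLIntegral_sq_newtonianDipole_ball x w j hδ hm (ht k) (ht_le k) fun u hu =>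
        ⟨(hw u hu).2.1, (hw u hu).2.2.2.le⟩

/-- **Proposition 3.1(a).** Let `Ω ⊆ ℝ³` be open, `x ∈ Ω`, and `σ ⊆ ℝ³` a compact null set.
Let `Φ(z) = ∂G/∂z_j(z − x) = −(z−x)_j/(4π‖z−x‖³)` and let `(v_n)` be measurable functions
with `∫_K (v_n − Φ)² → 0` for every compact `K ⊆ Ω ∖ σ`. Then for every finite open cone `V`
with vertex at `x` (unit axis `a`, opening `Θ ∈ (0, π/2)`, radius `R > 0`),
`∫_{V ∩ Ω} v_n² dz → +∞`. -/
theorem prop31a (Ω : Set (EuclideanSpace ℝ (Fin 3))) (hΩ : IsOpen Ω)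
    (x : EuclideanSpace ℝ (Fin 3)) (hx : x ∈ Ω)
    (σ : Set (EuclideanSpace ℝ (Fin 3))) (hσc : IsCompact σ) (hσ0 : volume σ = 0)
    (j : Fin 3) (Φ : EuclideanSpace ℝ (Fin 3) → ℝ)
    (hΦ : ∀ z, Φ z = -((z - x) j) / (4 * Real.pi * ‖z - x‖ ^ 3))
    (v : ℕ → EuclideanSpace ℝ (Fin 3) → ℝ) (hmeas : ∀ n, Measurable (v n))
    (hconv : ∀ K : Set (EuclideanSpace ℝ (Fin 3)), K ⊆ Ω \ σ → IsCompact K →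
      Tendsto (fun n => ∫ z in K, (v n z - Φ z) ^ 2) atTop (𝓝 0))
    (a : EuclideanSpace ℝ (Fin 3)) (ha : ‖a‖ = 1)
    (Θ : ℝ) (hΘ : Θ ∈ Set.Ioo 0 (Real.pi / 2)) (R : ℝ) (hR : 0 < R) :
    Tendsto
      (fun n => ∫⁻ z in
        (({z | (inner ℝ (z - x) a : ℝ) > ‖z - x‖ * Real.cos Θ} ∩ Metric.ball x R) ∩ Ω),
        ENNReal.ofReal ((v n z) ^ 2))
      atTop (𝓝 ⊤) := by
  obtain rfl : Φ = newtonianDipole x j := funext hΦ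
  set S := ({z | (inner ℝ (z - x) a : ℝ) > ‖z - x‖ * Real.cos Θ} ∩ Metric.ball x R) ∩ Ω
  have hcos : cos Θ < 1 := by
    simpa using cos_lt_cos_of_nonneg_of_le_pi le_rfl (by linarith [hΘ.2, pi_pos]) hΘ.1
  obtain ⟨ρ, hρ, hρΩ⟩ := Metric.isOpen_iff.1 hΩ x hx
  have hS : ∫⁻ z in S \ σ, ENNReal.ofReal (newtonianDipole x j z ^ 2) = ⊤ := by
    rw [setLIntegral_congr (sdiff_null_ae_eq_self hσ0)]
    refine top_unique ((setLIntegral_sq_newtonianDipole_cone_eq_top x a ha hcos j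
      (lt_min hR hρ)).symm.le.trans (lintegral_mono_set ?_))
    exact fun z ⟨hz, hzr⟩ => ⟨⟨hz, ball_subset_ball (min_le_left _ _) hzr⟩,
      hρΩ (ball_subset_ball (min_le_right _ _) hzr)⟩
  have hU : IsOpen (S \ σ) :=
    (((isOpen_lt (by fun_prop) (by fun_prop)).inter isOpen_ball).inter hΩ).sdiff hσc.isClosed
  have hxS : x ∉ S := fun h => by simpa using h.1.1
  rw [ENNReal.tendsto_nhds_top_iff_nat]
  intro N
  obtain ⟨K, hKU, hK, hNK⟩ := hU.exists_isCompact_lt_setLIntegral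
    (b := 2 * N + 2 * ENNReal.ofReal 1)
    (by rw [hS]; exact lt_top_iff_ne_top.2 (by simp [ENNReal.mul_eq_top]))
  have hK_fin : ∫⁻ z in K, ENNReal.ofReal (newtonianDipole x j z ^ 2) ≠ ⊤ :=
    ((((continuousOn_newtonianDipole x j).mono fun z hz h => hxS (h ▸ (hKU hz).1)).pow 2
      ).integrableOn_compact hK).lintegral_lt_top.ne
  filter_upwards [(hconv K (fun z hz => ⟨(hKU hz).1.2, (hKU hz).2⟩) hK).eventually
    (ge_mem_nhds one_pos)] with n hn
  have hlt := hNK.trans_le <| lintegral_ofReal_sq_le_of_integral_sq_sub_le (hmeas n)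
    (measurable_newtonianDipole x j) hK_fin hn
  calc (N : ℝ≥0∞) < ∫⁻ z in K, ENNReal.ofReal (v n z ^ 2) :=
        lt_of_mul_lt_mul_left ((ENNReal.add_lt_add_iff_right (by simp)).1 hlt) zero_le
    _ ≤ _ := lintegral_mono_set (hKU.trans sdiff_subset)
end
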